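/- arXiv:1802.04607 — 5 statements merged into one kernel-verified Lean document; each statement's English description precedes it below -/
import Mathlib

section
/- If the proper right-divisibility relation on a monoid M is well-founded, then there exists a map λ from M to the ordinals such that λ(gh) ≥ λ(h) + λ(g) for all g, h in M, and λ(g) > 0 for every non-invertible g. -/
section Aux
open scoped Classical

variable {M : Type u} [Monoid M]

private def pdvd (f g : M) : Prop := ∃ h', ¬ IsUnit h' ∧ g = h' * f

private theorem isUnit_left_of_mul (wf : WellFounded (pdvd (M := M))) {a b : M}
    (hab : IsUnit (a * b)) : IsUnit a := by
  obtain ⟨u, hu⟩ := hab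
  by_contra ha
  set k : M := b * (u⁻¹ : Mˣ) with hk
  have hak : a * k = 1 := by
    rw [hk, ← mul_assoc, ← hu, Units.mul_inv]
  have hknu : ¬ IsUnit k := by
    intro hku
    apply ha
    obtain ⟨v, hv⟩ := hku
    have : a = (v⁻¹ : Mˣ) := by
      have := congrArg (· * ((v⁻¹ : Mˣ) : M)) hak
      simpa [mul_assoc, ← hv] using this
    exact this ▸ (v⁻¹).isUnit
  have h1 : pdvd k 1 := ⟨a, ha, hak.symm⟩
  have h2 : pdvd 1 k := ⟨k, hknu, (mul_one k).symm⟩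
  exact wf.asymmetric k 1 h1 h2

private noncomputable def lamAux (wf : WellFounded (pdvd (M := M))) : M → Ordinal.{u} :=
  wf.fix (fun g IH =>
    if _ : IsUnit g then 0 else ⨆ f : {f : M // pdvd f g}, IH f f.2 + 1)

private theorem lamAux_eq (wf : WellFounded (pdvd (M := M))) (g : M) :
    lamAux wf g = if IsUnit g then 0 else ⨆ f : {f : M // pdvd f g}, lamAux wf f + 1 := by
  rw [lamAux, WellFounded.fix_eq]
  rfl

private theorem lamAux_lt (wf : WellFounded (pdvd (M := M))) {f g : M}
    (hg : ¬ IsUnit g) (h : pdvd f g) : lamAux wf f + 1 ≤ lamAux wf g := by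
  rw [lamAux_eq wf g, if_neg hg]
  exact Ordinal.le_iSup (fun f : {f : M // pdvd f g} => lamAux wf f + 1) ⟨f, h⟩

private theorem lamAux_unit_mul (wf : WellFounded (pdvd (M := M))) {u : M}
    (hu : IsUnit u) (h : M) : lamAux wf (u * h) = lamAux wf h := by
  obtain ⟨v, rfl⟩ := hu
  by_cases hh : IsUnit h
  · rw [lamAux_eq wf h, if_pos hh, lamAux_eq wf _, if_pos (v.isUnit.mul hh)]
  · have hvh : ¬ IsUnit ((v : M) * h) := fun hvh => by
      have : IsUnit ((v⁻¹ : Mˣ) * ((v : M) * h)) := (v⁻¹).isUnit.mul hvh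
      rw [← mul_assoc, Units.inv_mul, one_mul] at this
      exact hh this
    have key : ∀ f : M, pdvd f h ↔ pdvd f ((v : M) * h) := by
      intro f
      constructor
      · rintro ⟨h', hh', rfl⟩
        refine ⟨(v : M) * h', fun hu' => hh' ?_, by rw [mul_assoc]⟩
        have : IsUnit ((v⁻¹ : Mˣ) * ((v : M) * h')) := (v⁻¹).isUnit.mul hu'
        rwa [← mul_assoc, Units.inv_mul, one_mul] at this
      · rintro ⟨h', hh', heq⟩
        refine ⟨(v⁻¹ : Mˣ) * h', fun hu' => hh' ?_, ?_⟩
        · have : IsUnit ((v : M) * ((v⁻¹ : Mˣ) * h')) := v.isUnit.mul hu'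
          rwa [← mul_assoc, Units.mul_inv, one_mul] at this
        · have : ((v⁻¹ : Mˣ) : M) * ((v : M) * h) = (v⁻¹ : Mˣ) * (h' * f) := by rw [heq]
          rwa [← mul_assoc, Units.inv_mul, one_mul, ← mul_assoc] at this
    apply le_antisymm
    · rw [lamAux_eq wf ((v : M) * h), if_neg hvh]
      refine Ordinal.iSup_le fun f => ?_
      exact lamAux_lt wf hh ((key f).2 f.2)
    · rw [lamAux_eq wf h, if_neg hh]
      refine Ordinal.iSup_le fun f => ?_
      exact lamAux_lt wf hvh ((key f).1 f.2)

private theorem lamAux_main (wf : WellFounded (pdvd (M := M))) (g h : M) :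
    lamAux wf h + lamAux wf g ≤ lamAux wf (g * h) := by
  induction g using WellFounded.induction wf with
  | _ g IH =>
    by_cases hg : IsUnit g
    · rw [lamAux_eq wf g, if_pos hg, add_zero, lamAux_unit_mul wf hg]
    · have hne : Nonempty {f : M // pdvd f g} := ⟨⟨1, g, hg, (mul_one g).symm⟩⟩
      rw [lamAux_eq wf g, if_neg hg,
        (Ordinal.isNormal_add_right (lamAux wf h)).map_iSup]
      refine Ordinal.iSup_le fun fp => ?_
      obtain ⟨f, hf⟩ := fp
      obtain ⟨h', hh', rfl⟩ := hf
      have hgh : ¬ IsUnit (h' * f * h) := fun hu' =>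
        hh' (isUnit_left_of_mul wf (isUnit_left_of_mul wf hu'))
      calc lamAux wf h + (lamAux wf f + 1)
          = lamAux wf h + lamAux wf f + 1 := by rw [add_assoc]
        _ ≤ lamAux wf (f * h) + 1 := add_le_add_left (IH f ⟨h', hh', rfl⟩) 1
        _ ≤ lamAux wf (h' * f * h) := by
            rw [mul_assoc]
            exact lamAux_lt wf (by rwa [← mul_assoc]) ⟨h', hh', rfl⟩
      exact Ordinal.bddAbove_range _

end Aux

/-- If the proper right-divisibility relation on a monoid `M` is well-founded,
then there exists a map `λ` from `M` to the ordinals such that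
`λ(g*h) ≥ λ(h) + λ(g)` for all `g, h` in `M`, and `λ(g) > 0` for every
non-invertible `g`. -/
theorem stmt5 {M : Type u} [Monoid M]
    (wf : WellFounded (fun g h : M => ∃ h', ¬ IsUnit h' ∧ h = h' * g)) :
    ∃ lam : M → Ordinal.{u},
      (∀ g h : M, lam h + lam g ≤ lam (g * h)) ∧
      (∀ g : M, ¬ IsUnit g → 0 < lam g) := by
  have wf' : WellFounded (pdvd (M := M)) := wf
  refine ⟨lamAux wf', lamAux_main wf', fun g hg => ?_⟩
  have h1 : lamAux wf' 1 + 1 ≤ lamAux wf' g :=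
    lamAux_lt wf' hg ⟨g, hg, (mul_one g).symm⟩
  exact lt_of_lt_of_le (lt_of_lt_of_le zero_lt_one (le_add_self : (1 : Ordinal) ≤ lamAux wf' 1 + 1)) h1
end

section
/- Let (S,R) be a monoid presentation admitting an ≡_R-invariant map λ : S* → Ordinal with λ(sw) > λ(w) for all s ∈ S, w ∈ S*. Then the presented monoid M = ⟨S | R⟩⁺ is right noetherian: the proper right-divisibility relation on M is well-founded. -/
lemma stmt9_aux {S : Type u} (lam : FreeMonoid S → Ordinal.{u})
    (hlt : ∀ (s : S) (w : FreeMonoid S), lam w < lam (FreeMonoid.of s * w)) :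
    ∀ (u w : FreeMonoid S), u ≠ 1 → lam w < lam (u * w) := by
  intro u
  induction u using FreeMonoid.recOn with
  | one => intro w h; exact absurd rfl h
  | of_mul s u ih =>
    intro w _
    by_cases hu : u = 1
    · subst hu; simpa using hlt s w
    · calc lam w < lam (u * w) := ih w hu
        _ < lam (FreeMonoid.of s * (u * w)) := hlt s (u * w)
        _ = lam (FreeMonoid.of s * u * w) := by rw [mul_assoc]

/-- Let `(S,R)` be a monoid presentation admitting an `≡_R`-invariant map
`λ : S* → Ordinal` with `λ(s*w) > λ(w)` for all `s ∈ S`, `w ∈ S*`. Then the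
presented monoid `M = ⟨S | R⟩⁺` is right noetherian: the proper
right-divisibility relation on `M` is well-founded. -/
theorem stmt9 {S : Type u} (R : FreeMonoid S → FreeMonoid S → Prop)
    (lam : FreeMonoid S → Ordinal.{u})
    (hinv : ∀ u v : FreeMonoid S, conGen R u v → lam u = lam v)
    (hlt : ∀ (s : S) (w : FreeMonoid S), lam w < lam (FreeMonoid.of s * w)) :
    WellFounded (fun a b : (conGen R).Quotient =>
      ∃ c, ¬ IsUnit c ∧ b = c * a) := by
  set mu : (conGen R).Quotient → Ordinal.{u} :=
    Quotient.lift lam (fun u v h => hinv u v h) with hmu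
  have key : ∀ a b : (conGen R).Quotient,
      (∃ c, ¬ IsUnit c ∧ b = c * a) → mu a < mu b := by
    intro a b ⟨c, hc, hb⟩
    obtain ⟨u, rfl⟩ := Quotient.exists_rep c
    obtain ⟨w, rfl⟩ := Quotient.exists_rep a
    have hu : u ≠ 1 := by
      rintro rfl
      exact hc (by exact isUnit_one)
    subst hb
    show lam w < lam (u * w)
    exact stmt9_aux lam hlt u w hu
  exact Subrelation.wf (fun {a b} h => key a b h) (InvImage.wf mu Ordinal.lt_wf)
end

section
/- In the restricted colored braid monoid presentation B⁺r(n,C) with |C| ≥ 2, the equivalence class of the word σ_{3,c}σ_{2,a}σ_{1,c}σ_{3,b}σ_{2,b} (for a ≠ b, a ≠ c) consists of exactly two words: itself and σ_{3,c}σ_{2,a}σ_{3,b}σ_{1,c}σ_{2,b}; in particular no word in this class begins with σ_{2,b}. -/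
/-- The defining relations of the restricted positive colored braid monoid
`B⁺r(n,C)`: generators are pairs `(i,a) : Fin (n-1) × C` (the real index being
`i.val + 1`), with `σ_{i,a}σ_{j,b} = σ_{j,b}σ_{i,a}` for `|i-j| ≥ 2` and
`σ_{i,a}σ_{j,a}σ_{i,b} = σ_{j,b}σ_{i,a}σ_{j,a}` for `|i-j| = 1`. -/
inductive RestrictedColoredBraidRel (n : ℕ) (C : Type) :
    FreeMonoid (Fin (n - 1) × C) → FreeMonoid (Fin (n - 1) × C) → Prop
  | comm (i j : Fin (n - 1)) (a b : C)
      (hij : i.val + 2 ≤ j.val ∨ j.val + 2 ≤ i.val) :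
      RestrictedColoredBraidRel n C
        (FreeMonoid.of (i, a) * FreeMonoid.of (j, b))
        (FreeMonoid.of (j, b) * FreeMonoid.of (i, a))
  | braid (i j : Fin (n - 1)) (a b : C)
      (hij : i.val + 1 = j.val ∨ j.val + 1 = i.val) :
      RestrictedColoredBraidRel n C
        (FreeMonoid.of (i, a) * FreeMonoid.of (j, a) * FreeMonoid.of (i, b))
        (FreeMonoid.of (j, b) * FreeMonoid.of (i, a) * FreeMonoid.of (j, a))

private lemma fm_eq_iff {α : Type*} (x y : FreeMonoid α) :
    x = y ↔ x.toList = y.toList := Iff.symm FreeMonoid.toList.apply_eq_iff_eq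

private lemma key (n : ℕ) (hn : 4 ≤ n) (h0 : 0 < n - 1) (h1 : 1 < n - 1) (h2 : 2 < n - 1)
    (C : Type) (a b c : C)
    (hab : a ≠ b) (hac : a ≠ c)
    {x y : FreeMonoid (Fin (n - 1) × C)}
    (hxy : RestrictedColoredBraidRel n C x y)
    (u v : List (Fin (n - 1) × C)) :
    (u ++ (FreeMonoid.toList x ++ v) =
        [(⟨2, h2⟩, c), (⟨1, h1⟩, a), (⟨0, h0⟩, c),
         (⟨2, h2⟩, b), (⟨1, h1⟩, b)] ∨
     u ++ (FreeMonoid.toList x ++ v) =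
        [(⟨2, h2⟩, c), (⟨1, h1⟩, a), (⟨2, h2⟩, b),
         (⟨0, h0⟩, c), (⟨1, h1⟩, b)]) ↔
    (u ++ (FreeMonoid.toList y ++ v) =
        [(⟨2, h2⟩, c), (⟨1, h1⟩, a), (⟨0, h0⟩, c),
         (⟨2, h2⟩, b), (⟨1, h1⟩, b)] ∨
     u ++ (FreeMonoid.toList y ++ v) =
        [(⟨2, h2⟩, c), (⟨1, h1⟩, a), (⟨2, h2⟩, b),
         (⟨0, h0⟩, c), (⟨1, h1⟩, b)]) := by
  rcases hxy with ⟨i, j, a', b', hij⟩ | ⟨i, j, a', b', hij⟩ <;>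
    simp only [FreeMonoid.toList_mul, FreeMonoid.toList_of, List.append_assoc,
      List.singleton_append, List.cons_append, List.nil_append] <;>
    constructor <;>
    rintro (h | h) <;>
    rcases u with _ | ⟨x1, _ | ⟨x2, _ | ⟨x3, _ | ⟨x4, _ | ⟨x5, u⟩⟩⟩⟩⟩ <;>
    simp_all [List.cons.injEq, Prod.mk.injEq, Fin.ext_iff, Prod.ext_iff] <;>
    (try casesm* _ ∧ _) <;>
    first | omega | simp_all

/-- In the restricted colored braid presentation `B⁺r(n,C)` (`n ≥ 4`), for
`a ≠ b`, `a ≠ c`, the equivalence class of `σ_{3,c}σ_{2,a}σ_{1,c}σ_{3,b}σ_{2,b}`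
consists of exactly two words: itself and `σ_{3,c}σ_{2,a}σ_{3,b}σ_{1,c}σ_{2,b}`;
in particular no word in this class begins with `σ_{2,b}`. -/
theorem stmt15 (n : ℕ) (hn : 4 ≤ n) (C : Type) (a b c : C)
    (hab : a ≠ b) (hac : a ≠ c) :
    ∀ v : FreeMonoid (Fin (n - 1) × C),
      conGen (RestrictedColoredBraidRel n C)
        (FreeMonoid.of (⟨2, by omega⟩, c) * FreeMonoid.of (⟨1, by omega⟩, a) *
          FreeMonoid.of (⟨0, by omega⟩, c) * FreeMonoid.of (⟨2, by omega⟩, b) *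
          FreeMonoid.of (⟨1, by omega⟩, b)) v ↔
      (v = FreeMonoid.of (⟨2, by omega⟩, c) * FreeMonoid.of (⟨1, by omega⟩, a) *
          FreeMonoid.of (⟨0, by omega⟩, c) * FreeMonoid.of (⟨2, by omega⟩, b) *
          FreeMonoid.of (⟨1, by omega⟩, b) ∨
        v = FreeMonoid.of (⟨2, by omega⟩, c) * FreeMonoid.of (⟨1, by omega⟩, a) *
          FreeMonoid.of (⟨2, by omega⟩, b) * FreeMonoid.of (⟨0, by omega⟩, c) *
          FreeMonoid.of (⟨1, by omega⟩, b)) := by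
  intro w
  set W1 : FreeMonoid (Fin (n - 1) × C) :=
      FreeMonoid.of (⟨2, by omega⟩, c) * FreeMonoid.of (⟨1, by omega⟩, a) *
        FreeMonoid.of (⟨0, by omega⟩, c) * FreeMonoid.of (⟨2, by omega⟩, b) *
        FreeMonoid.of (⟨1, by omega⟩, b) with hW1
  set W2 : FreeMonoid (Fin (n - 1) × C) :=
      FreeMonoid.of (⟨2, by omega⟩, c) * FreeMonoid.of (⟨1, by omega⟩, a) *
        FreeMonoid.of (⟨2, by omega⟩, b) * FreeMonoid.of (⟨0, by omega⟩, c) *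
        FreeMonoid.of (⟨1, by omega⟩, b) with hW2
  have inv : ∀ x y : FreeMonoid (Fin (n - 1) × C),
      ConGen.Rel (RestrictedColoredBraidRel n C) x y →
      ∀ u v : FreeMonoid (Fin (n - 1) × C),
        ((u * x * v = W1 ∨ u * x * v = W2) ↔ (u * y * v = W1 ∨ u * y * v = W2)) := by
    intro x y h
    induction h with
    | of x y hxy =>
      intro u v
      have K := key n hn (by omega) (by omega) (by omega) C a b c hab hac hxy u.toList v.toList
      simp only [hW1, hW2, fm_eq_iff, FreeMonoid.toList_mul, FreeMonoid.toList_of,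
        List.append_assoc, List.singleton_append, List.cons_append, List.nil_append] at K ⊢
      exact K
    | refl x => intro u v; exact Iff.rfl
    | symm _ ih => intro u v; exact (ih u v).symm
    | trans _ _ ih1 ih2 => intro u v; exact (ih1 u v).trans (ih2 u v)
    | @mul p q r s _ _ ih1 ih2 =>
      intro u v
      have H1 := ih1 u (r * v)
      have H2 := ih2 (u * q) v
      simp only [← mul_assoc] at H1 H2 ⊢
      exact H1.trans H2
  constructor
  · intro h
    have := (inv _ _ h 1 1)
    simpa using this
  · rintro (rfl | rfl)
    · exact ConGen.Rel.refl _
    · have step : ConGen.Rel (RestrictedColoredBraidRel n C)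
          (FreeMonoid.of ((⟨0, by omega⟩ : Fin (n-1)), c) * FreeMonoid.of (⟨2, by omega⟩, b))
          (FreeMonoid.of ((⟨2, by omega⟩ : Fin (n-1)), b) * FreeMonoid.of (⟨0, by omega⟩, c)) :=
        ConGen.Rel.of _ _ (RestrictedColoredBraidRel.comm _ _ _ _ (by simp))
      have h2 := ConGen.Rel.mul (ConGen.Rel.mul
        (ConGen.Rel.refl (FreeMonoid.of ((⟨2, by omega⟩ : Fin (n-1)), c) *
          FreeMonoid.of (⟨1, by omega⟩, a))) step)
        (ConGen.Rel.refl (FreeMonoid.of ((⟨1, by omega⟩ : Fin (n-1)), b)))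
      have e1 : W1 = FreeMonoid.of ((⟨2, by omega⟩ : Fin (n-1)), c) * FreeMonoid.of (⟨1, by omega⟩, a) *
          (FreeMonoid.of (⟨0, by omega⟩, c) * FreeMonoid.of (⟨2, by omega⟩, b)) *
          FreeMonoid.of (⟨1, by omega⟩, b) := by rw [hW1]; simp [mul_assoc]
      have e2 : W2 = FreeMonoid.of ((⟨2, by omega⟩ : Fin (n-1)), c) * FreeMonoid.of (⟨1, by omega⟩, a) *
          (FreeMonoid.of (⟨2, by omega⟩, b) * FreeMonoid.of (⟨0, by omega⟩, c)) *
          FreeMonoid.of (⟨1, by omega⟩, b) := by rw [hW2]; simp [mul_assoc]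
      rw [e1, e2]
      exact h2
end

section
/- In the colored braid monoid B⁺(n,C) with |C| ≥ 2, the generators σ_{1,a} and σ_{1,b} for a ≠ b admit no common right multiple. -/
/-- The defining relations of the positive colored braid monoid `B⁺(n,C)`:
generators are pairs `(i,a) : Fin (n-1) × C`, the real index being
`i.val + 1`. -/
inductive ColoredBraidRel (n : ℕ) (C : Type) :
    FreeMonoid (Fin (n - 1) × C) → FreeMonoid (Fin (n - 1) × C) → Prop
  | comm (i j : Fin (n - 1)) (a b : C)
      (hij : i.val + 2 ≤ j.val ∨ j.val + 2 ≤ i.val) :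
      ColoredBraidRel n C
        (FreeMonoid.of (i, a) * FreeMonoid.of (j, b))
        (FreeMonoid.of (j, b) * FreeMonoid.of (i, a))
  | braid (i j : Fin (n - 1)) (a b c : C)
      (hij : i.val + 1 = j.val ∨ j.val + 1 = i.val) :
      ColoredBraidRel n C
        (FreeMonoid.of (i, a) * FreeMonoid.of (j, b) * FreeMonoid.of (i, c))
        (FreeMonoid.of (j, c) * FreeMonoid.of (i, b) * FreeMonoid.of (j, a))

namespace Stmt18Aux

variable {n : ℕ} {C : Type}

def q0 (i : Fin (n-1)) : Fin n := ⟨i.val, by have := i.isLt; omega⟩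
def q1 (i : Fin (n-1)) : Fin n := ⟨i.val + 1, by have := i.isLt; omega⟩

@[simp] lemma q0_val (i : Fin (n-1)) : (q0 i : Fin n).val = i.val := rfl
@[simp] lemma q1_val (i : Fin (n-1)) : (q1 i : Fin n).val = i.val + 1 := rfl

lemma fin_ne {x y : Fin n} (h : x.val ≠ y.val) : x ≠ y := fun e => h (congrArg Fin.val e)

/-- The pair condition: the strands at the two crossing positions are exactly `s,t`. -/
def Pc (s t u v : Fin n) : Prop := (u = s ∧ v = t) ∨ (u = t ∧ v = s)

instance (s t u v : Fin n) : Decidable (Pc s t u v) := by unfold Pc; infer_instance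

/-- One step of the scanning automaton: track the permutation of strands and record the
color of the first crossing between strands `s` and `t`. -/
def step (s t : Fin n) (l : Fin (n-1) × C) (st : Equiv.Perm (Fin n) × Option C) :
    Equiv.Perm (Fin n) × Option C :=
  (st.1 * Equiv.swap (q0 l.1) (q1 l.1),
    match st.2 with
    | some d => some d
    | none => if Pc s t (st.1 (q0 l.1)) (st.1 (q1 l.1)) then some l.2 else none)

@[simp] lemma step_some (s t : Fin n) (l : Fin (n-1) × C) (π : Equiv.Perm (Fin n)) (d : C) :
    step s t l (π, some d) = (π * Equiv.swap (q0 l.1) (q1 l.1), some d) := rfl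

lemma swap_disjoint_comm (x y u v : Fin n) (h1 : x ≠ u) (h2 : x ≠ v) (h3 : y ≠ u) (h4 : y ≠ v) :
    Equiv.swap x y * Equiv.swap u v = Equiv.swap u v * Equiv.swap x y := by
  ext p
  simp only [Equiv.Perm.mul_apply, Equiv.swap_apply_def]
  split_ifs <;> simp_all

lemma swap_braid (x y z : Fin n) (hxy : x ≠ y) (hxz : x ≠ z) (hyz : y ≠ z) :
    Equiv.swap x y * Equiv.swap y z * Equiv.swap x y
      = Equiv.swap y z * Equiv.swap x y * Equiv.swap y z := by
  rw [Equiv.swap_mul_swap_mul_swap hxy hxz]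
  have := Equiv.swap_mul_swap_mul_swap (x := z) (y := y) (z := x) hyz.symm hxz.symm
  rw [Equiv.swap_comm y x, Equiv.swap_comm z y] at this
  rw [this, Equiv.swap_comm]

lemma comm_step (s t : Fin n) (i j : Fin (n-1))
    (hij : i.val + 2 ≤ j.val ∨ j.val + 2 ≤ i.val) (a b : C)
    (st : Equiv.Perm (Fin n) × Option C) :
    step s t (j, b) (step s t (i, a) st) = step s t (i, a) (step s t (j, b) st) := by
  obtain ⟨π, o⟩ := st
  have hf1 : Equiv.swap (q0 i) (q1 i) (q0 j) = q0 j :=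
    Equiv.swap_apply_of_ne_of_ne (fin_ne (by simp; omega)) (fin_ne (by simp; omega))
  have hf2 : Equiv.swap (q0 i) (q1 i) (q1 j) = q1 j :=
    Equiv.swap_apply_of_ne_of_ne (fin_ne (by simp; omega)) (fin_ne (by simp; omega))
  have hf3 : Equiv.swap (q0 j) (q1 j) (q0 i) = q0 i :=
    Equiv.swap_apply_of_ne_of_ne (fin_ne (by simp; omega)) (fin_ne (by simp; omega))
  have hf4 : Equiv.swap (q0 j) (q1 j) (q1 i) = q1 i :=
    Equiv.swap_apply_of_ne_of_ne (fin_ne (by simp; omega)) (fin_ne (by simp; omega))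
  have hcomm : Equiv.swap (q0 i) (q1 i) * Equiv.swap (q0 j) (q1 j)
      = Equiv.swap (q0 j) (q1 j) * Equiv.swap (q0 i) (q1 i) :=
    swap_disjoint_comm _ _ _ _ (fin_ne (by simp; omega)) (fin_ne (by simp; omega))
      (fin_ne (by simp; omega)) (fin_ne (by simp; omega))
  have hinj : Function.Injective π := π.injective
  cases o with
  | some d =>
      simp only [step_some, Prod.mk.injEq, and_true]
      rw [mul_assoc, mul_assoc, hcomm]
  | none =>
      have hexcl : ¬(Pc s t (π (q0 i)) (π (q1 i)) ∧ Pc s t (π (q0 j)) (π (q1 j))) := by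
        rintro ⟨hA, hB⟩
        have d1 : π (q0 i) ≠ π (q0 j) := fun e => by
          have := congrArg Fin.val (hinj e); simp at this; omega
        have d2 : π (q0 i) ≠ π (q1 j) := fun e => by
          have := congrArg Fin.val (hinj e); simp at this; omega
        have d3 : π (q1 i) ≠ π (q0 j) := fun e => by
          have := congrArg Fin.val (hinj e); simp at this; omega
        have d4 : π (q1 i) ≠ π (q1 j) := fun e => by
          have := congrArg Fin.val (hinj e); simp at this; omega
        rcases hA with ⟨h1, h2⟩ | ⟨h1, h2⟩ <;> rcases hB with ⟨h3, h4⟩ | ⟨h3, h4⟩ <;> simp_all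
      by_cases hA : Pc s t (π (q0 i)) (π (q1 i)) <;>
        by_cases hB : Pc s t (π (q0 j)) (π (q1 j))
      · exact absurd ⟨hA, hB⟩ hexcl
      all_goals
        simp [step, hA, hB, Equiv.Perm.mul_apply, hf1, hf2, hf3, hf4, mul_assoc, hcomm]

lemma braid_step (s t : Fin n) (i j : Fin (n-1)) (hij : i.val + 1 = j.val)
    (a b c : C) (st : Equiv.Perm (Fin n) × Option C) :
    step s t (i, c) (step s t (j, b) (step s t (i, a) st))
      = step s t (j, a) (step s t (i, b) (step s t (j, c) st)) := by
  obtain ⟨π, o⟩ := st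
  have e : q0 j = (q1 i : Fin n) := Fin.ext (by simp; omega)
  have hp01 : (q0 i : Fin n) ≠ q1 i := fin_ne (by simp)
  have hp02 : (q0 i : Fin n) ≠ q1 j := fin_ne (by simp; omega)
  have hp12 : (q1 i : Fin n) ≠ q1 j := fin_ne (by simp; omega)
  have s1 : Equiv.swap (q0 i) (q1 i) (q1 i : Fin n) = q0 i := Equiv.swap_apply_right _ _
  have s2 : Equiv.swap (q0 i) (q1 i) (q1 j : Fin n) = q1 j :=
    Equiv.swap_apply_of_ne_of_ne hp02.symm hp12.symm
  have s3 : Equiv.swap (q1 i) (q1 j) (q0 i : Fin n) = q0 i :=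
    Equiv.swap_apply_of_ne_of_ne hp01 hp02
  have s4 : Equiv.swap (q1 i) (q1 j) (q1 i : Fin n) = q1 j := Equiv.swap_apply_left _ _
  have s5 : Equiv.swap (q0 i) (q1 i) (q0 i : Fin n) = q1 i := Equiv.swap_apply_left _ _
  have s6 : Equiv.swap (q1 i) (q1 j) (q1 j : Fin n) = q1 i := Equiv.swap_apply_right _ _
  have hbr : Equiv.swap (q0 i) (q1 i) * (Equiv.swap (q1 i) (q1 j) * Equiv.swap (q0 i) (q1 i))
      = Equiv.swap (q1 i) (q1 j) * (Equiv.swap (q0 i) (q1 i) * Equiv.swap (q1 i) (q1 j)) := by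
    have := swap_braid (q0 i : Fin n) (q1 i) (q1 j) hp01 hp02 hp12
    simpa [mul_assoc] using this
  have hinj : Function.Injective π := π.injective
  have dXY : π (q0 i) ≠ π (q1 i) := fun h => hp01 (hinj h)
  have dXZ : π (q0 i) ≠ π (q1 j) := fun h => hp02 (hinj h)
  have dYZ : π (q1 i) ≠ π (q1 j) := fun h => hp12 (hinj h)
  cases o with
  | some d =>
      simp only [step_some, Prod.mk.injEq, and_true, e]
      simp [mul_assoc, hbr]
  | none =>
      have e12 : ¬(Pc s t (π (q0 i)) (π (q1 i)) ∧ Pc s t (π (q0 i)) (π (q1 j))) := by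
        rintro ⟨⟨h1, h2⟩ | ⟨h1, h2⟩, ⟨h3, h4⟩ | ⟨h3, h4⟩⟩ <;> simp_all
      have e13 : ¬(Pc s t (π (q0 i)) (π (q1 i)) ∧ Pc s t (π (q1 i)) (π (q1 j))) := by
        rintro ⟨⟨h1, h2⟩ | ⟨h1, h2⟩, ⟨h3, h4⟩ | ⟨h3, h4⟩⟩ <;> simp_all
      have e23 : ¬(Pc s t (π (q0 i)) (π (q1 j)) ∧ Pc s t (π (q1 i)) (π (q1 j))) := by
        rintro ⟨⟨h1, h2⟩ | ⟨h1, h2⟩, ⟨h3, h4⟩ | ⟨h3, h4⟩⟩ <;> simp_all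
      by_cases h1 : Pc s t (π (q0 i)) (π (q1 i)) <;>
        by_cases h2 : Pc s t (π (q0 i)) (π (q1 j)) <;>
        by_cases h3 : Pc s t (π (q1 i)) (π (q1 j))
      · exact absurd ⟨h1, h2⟩ e12
      · exact absurd ⟨h1, h2⟩ e12
      · exact absurd ⟨h1, h3⟩ e13
      · simp [step, e, h1, h2, h3, Equiv.Perm.mul_apply, s1, s2, s3, s4, s5, s6,
          mul_assoc, hbr]
      · exact absurd ⟨h2, h3⟩ e23
      all_goals
        simp [step, e, h1, h2, h3, Equiv.Perm.mul_apply, s1, s2, s3, s4, s5, s6,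
          mul_assoc, hbr]

/-- The scanning automaton as a monoid homomorphism (into the opposite of `Function.End`,
so that letters are processed left to right). -/
def hom (n : ℕ) (C : Type) (s t : Fin n) :
    FreeMonoid (Fin (n-1) × C) →* (Function.End (Equiv.Perm (Fin n) × Option C))ᵐᵒᵖ :=
  FreeMonoid.lift fun l => MulOpposite.op (step s t l)

lemma hom_of (s t : Fin n) (l : Fin (n-1) × C) :
    hom n C s t (FreeMonoid.of l) = MulOpposite.op (step s t l) := rfl

lemma hom_mul_apply (s t : Fin n) (u v : FreeMonoid (Fin (n-1) × C))
    (st : Equiv.Perm (Fin n) × Option C) :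
    MulOpposite.unop (hom n C s t (u * v)) st
      = MulOpposite.unop (hom n C s t v) (MulOpposite.unop (hom n C s t u) st) := by
  rw [map_mul]
  rfl

lemma hom_rel (s t : Fin n) {u v : FreeMonoid (Fin (n-1) × C)}
    (h : ColoredBraidRel n C u v) : hom n C s t u = hom n C s t v := by
  cases h with
  | comm i j a b hij =>
      apply MulOpposite.unop_injective
      funext st
      have h1 := hom_mul_apply s t (FreeMonoid.of (i, a)) (FreeMonoid.of (j, b)) st
      have h2 := hom_mul_apply s t (FreeMonoid.of (j, b)) (FreeMonoid.of (i, a)) st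
      rw [h1, h2, hom_of, hom_of]
      exact comm_step s t i j hij a b st
  | braid i j a b c hij =>
      apply MulOpposite.unop_injective
      funext st
      have h1 := hom_mul_apply s t (FreeMonoid.of (i, a) * FreeMonoid.of (j, b))
        (FreeMonoid.of (i, c)) st
      have h2 := hom_mul_apply s t (FreeMonoid.of (i, a)) (FreeMonoid.of (j, b)) st
      have h3 := hom_mul_apply s t (FreeMonoid.of (j, c) * FreeMonoid.of (i, b))
        (FreeMonoid.of (j, a)) st
      have h4 := hom_mul_apply s t (FreeMonoid.of (j, c)) (FreeMonoid.of (i, b)) st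
      rw [h1, h2, h3, h4, hom_of, hom_of, hom_of, hom_of, hom_of, hom_of]
      rcases hij with hij | hij
      · exact braid_step s t i j hij a b c st
      · exact (braid_step s t j i hij c b a st).symm

lemma hom_keeps_some (s t : Fin n) (w : FreeMonoid (Fin (n-1) × C)) :
    ∀ st : Equiv.Perm (Fin n) × Option C, ∀ d : C, st.2 = some d →
      (MulOpposite.unop (hom n C s t w) st).2 = some d := by
  induction w using FreeMonoid.inductionOn' with
  | one => intro st d h; exact h
  | of_mul l w ih =>
      intro st d h
      rw [hom_mul_apply]
      apply ih
      obtain ⟨π, o⟩ := st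
      cases o with
      | some d' => exact h
      | none => simp at h

lemma first_step (s t : Fin n) (hs : s.val = 0) (ht : t.val = 1) (i0 : Fin (n-1))
    (h0 : i0.val = 0) (a : C) :
    (step s t (i0, a) ((1 : Equiv.Perm (Fin n)), none)).2 = some a := by
  have e0 : (q0 i0 : Fin n) = s := Fin.ext (by simp [h0, hs])
  have e1 : (q1 i0 : Fin n) = t := Fin.ext (by simp [h0, ht])
  show (if Pc s t ((1 : Equiv.Perm (Fin n)) (q0 i0)) ((1 : Equiv.Perm (Fin n)) (q1 i0))
      then some a else none) = some a
  rw [Equiv.Perm.one_apply, Equiv.Perm.one_apply, e0, e1]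
  exact if_pos (Or.inl ⟨rfl, rfl⟩)

end Stmt18Aux

/-- In the colored braid monoid `B⁺(n,C)` (`n ≥ 2`) with two distinct colors
`a ≠ b`, the generators `σ_{1,a}` and `σ_{1,b}` admit no common right
multiple: there are no `x, y` in `B⁺(n,C)` with `σ_{1,a}·x = σ_{1,b}·y`. -/
theorem stmt18 (n : ℕ) (hn : 2 ≤ n) (C : Type) (a b : C) (hab : a ≠ b) :
    ∀ x y : (conGen (ColoredBraidRel n C)).Quotient,
      (conGen (ColoredBraidRel n C)).mk' (FreeMonoid.of (⟨0, by omega⟩, a)) * x ≠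
      (conGen (ColoredBraidRel n C)).mk' (FreeMonoid.of (⟨0, by omega⟩, b)) * y := by
  intro x y hxy
  obtain ⟨u, rfl⟩ := Con.mk'_surjective x
  obtain ⟨v, rfl⟩ := Con.mk'_surjective y
  rw [← map_mul, ← map_mul] at hxy
  have hcon : conGen (ColoredBraidRel n C)
      (FreeMonoid.of (⟨0, by omega⟩, a) * u) (FreeMonoid.of (⟨0, by omega⟩, b) * v) := by
    have h' := (Con.ker_rel ((conGen (ColoredBraidRel n C)).mk')).mpr hxy
    rwa [Con.mk'_ker] at h'
  have hle : conGen (ColoredBraidRel n C) ≤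
      Con.ker (Stmt18Aux.hom n C ⟨0, by omega⟩ ⟨1, by omega⟩) :=
    Con.conGen_le.mpr fun p q hr => (Con.ker_rel _).mpr (Stmt18Aux.hom_rel _ _ hr)
  have heq := (Con.ker_rel _).mp (hle hcon)
  have hLa : (MulOpposite.unop (Stmt18Aux.hom n C ⟨0, by omega⟩ ⟨1, by omega⟩
      (FreeMonoid.of (⟨0, by omega⟩, a) * u)) (1, none)).2 = some a := by
    rw [Stmt18Aux.hom_mul_apply]
    exact Stmt18Aux.hom_keeps_some _ _ u _ a
      (Stmt18Aux.first_step ⟨0, by omega⟩ ⟨1, by omega⟩ rfl rfl ⟨0, by omega⟩ rfl a)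
  have hLb : (MulOpposite.unop (Stmt18Aux.hom n C ⟨0, by omega⟩ ⟨1, by omega⟩
      (FreeMonoid.of (⟨0, by omega⟩, b) * v)) (1, none)).2 = some b := by
    rw [Stmt18Aux.hom_mul_apply]
    exact Stmt18Aux.hom_keeps_some _ _ v _ b
      (Stmt18Aux.first_step ⟨0, by omega⟩ ⟨1, by omega⟩ rfl rfl ⟨0, by omega⟩ rfl b)
  rw [heq] at hLa
  exact hab (Option.some.inj (hLb.symm.trans hLa)).symm
end

section
/- If a monoid presentation (S,R) without ε-relations has the property that for all words u, u' in S*: u ≡_R u' implies that the pair (u, u') right-reverses to (ε, ε), and R contains no relation of the form su = sv with s ∈ S and u ≠ v, then the presented monoid is left cancellative. -/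
/-- `RevGrid R u v u₁ v₁` means there is a right-reversing grid for the
presentation with relations `R`, with left edge `u`, top edge `v`, right edge
`u₁` and bottom edge `v₁`. Grids are built from the elementary tiles (for
`s, t ∈ S` and each relation `s·t₁⋯t_q = t·s₁⋯s_p` of `R`, a tile with left
edge `s`, top edge `t`, bottom edge `t₁⋯t_q` and right edge `s₁⋯s_p`, plus the
degenerate tiles with an empty edge) by horizontal and vertical pasting. -/
inductive RevGrid {S : Type*} (R : FreeMonoid S → FreeMonoid S → Prop) :
    FreeMonoid S → FreeMonoid S → FreeMonoid S → FreeMonoid S → Prop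
  | empty_left (v : FreeMonoid S) : RevGrid R 1 v 1 v
  | empty_top (u : FreeMonoid S) : RevGrid R u 1 u 1
  | cancel (s : S) : RevGrid R (.of s) (.of s) 1 1
  | rel (s t : S) (u₁ v₁ : FreeMonoid S)
      (h : R (.of s * v₁) (.of t * u₁) ∨ R (.of t * u₁) (.of s * v₁)) :
      RevGrid R (.of s) (.of t) u₁ v₁
  | horiz {u v v' u' u₁ v₁ v₁' : FreeMonoid S} :
      RevGrid R u v u' v₁ → RevGrid R u' v' u₁ v₁' →
      RevGrid R u (v * v') u₁ (v₁ * v₁')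
  | vert {u u' v u₁ u₁' v₁ v₁' : FreeMonoid S} :
      RevGrid R u v u₁ v₁ → RevGrid R u' v₁ u₁' v₁' →
      RevGrid R (u * u') v (u₁ * u₁') v₁'

namespace Stmt19Aux

variable {S : Type*} {R : FreeMonoid S → FreeMonoid S → Prop}

theorem fm_ext {u v : FreeMonoid S} (h : u.toList = v.toList) : u = v :=
  FreeMonoid.toList.injective h

theorem mul_eq_one' {u v : FreeMonoid S} (h : u * v = 1) : u = 1 ∧ v = 1 := by
  have h' := congrArg FreeMonoid.toList h
  simp only [FreeMonoid.toList_mul, FreeMonoid.toList_one, List.append_eq_nil_iff] at h'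
  exact ⟨fm_ext (by simp [h'.1]), fm_ext (by simp [h'.2])⟩

theorem of_ne_one (s : S) : (FreeMonoid.of s : FreeMonoid S) ≠ 1 := by
  intro h
  have := congrArg FreeMonoid.toList h
  simp at this

theorem mul_eq_of {u v : FreeMonoid S} {s : S} (h : u * v = .of s) :
    (u = 1 ∧ v = .of s) ∨ (u = .of s ∧ v = 1) := by
  have h' := congrArg FreeMonoid.toList h
  simp only [FreeMonoid.toList_mul, FreeMonoid.toList_of] at h'
  rcases hu : u.toList with _ | ⟨a, l⟩
  · left
    exact ⟨fm_ext (by simp [hu]), fm_ext (by rw [hu] at h'; simpa using h')⟩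
  · right
    rw [hu] at h'
    have h1 : a = s ∧ l ++ v.toList = [] := by
      constructor
      · exact (List.cons.injEq _ _ _ _ ▸ h').1
      · exact (List.cons.injEq _ _ _ _ ▸ h').2
    rcases List.append_eq_nil_iff.mp h1.2 with ⟨hl, hv⟩
    exact ⟨fm_ext (by simp [hu, h1.1, hl]), fm_ext (by simp [hv])⟩

theorem mul_eq_mul {u v a b : FreeMonoid S} (h : u * v = a * b) :
    ∃ c : FreeMonoid S, (a = u * c ∧ v = c * b) ∨ (u = a * c ∧ b = c * v) := by
  have h' := congrArg FreeMonoid.toList h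
  simp only [FreeMonoid.toList_mul] at h'
  rcases List.append_eq_append_iff.mp h' with ⟨l, h1, h2⟩ | ⟨l, h1, h2⟩
  · exact ⟨FreeMonoid.ofList l, Or.inl ⟨fm_ext (by simp [h1]), fm_ext (by simp [h2])⟩⟩
  · exact ⟨FreeMonoid.ofList l, Or.inr ⟨fm_ext (by simp [h1]), fm_ext (by simp [h2])⟩⟩

/-- Soundness of grids. -/
theorem grid_sound {u v u₁ v₁ : FreeMonoid S} (g : RevGrid R u v u₁ v₁) :
    ConGen.Rel R (u * v₁) (v * u₁) := by
  induction g with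
  | empty_left v => rw [one_mul, mul_one]; exact ConGen.Rel.refl v
  | empty_top u => rw [one_mul, mul_one]; exact ConGen.Rel.refl u
  | cancel s => exact ConGen.Rel.refl _
  | rel s t u₁ v₁ h =>
      rcases h with h | h
      · exact ConGen.Rel.of _ _ h
      · exact ConGen.Rel.symm (ConGen.Rel.of _ _ h)
  | horiz g1 g2 ih1 ih2 =>
      rw [← mul_assoc]
      refine ConGen.Rel.trans (ConGen.Rel.mul ih1 (ConGen.Rel.refl _)) ?_
      rw [mul_assoc]
      refine ConGen.Rel.trans (ConGen.Rel.mul (ConGen.Rel.refl _) ih2) ?_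
      rw [mul_assoc]
      exact ConGen.Rel.refl _
  | vert g1 g2 ih1 ih2 =>
      rw [mul_assoc]
      refine ConGen.Rel.trans (ConGen.Rel.mul (ConGen.Rel.refl _) ih2) ?_
      rw [← mul_assoc]
      refine ConGen.Rel.trans (ConGen.Rel.mul ih1 (ConGen.Rel.refl _)) ?_
      rw [mul_assoc]
      exact ConGen.Rel.refl _

/-- A grid with empty top edge is trivial. -/
theorem grid_top_one {u v u₁ v₁ : FreeMonoid S} (g : RevGrid R u v u₁ v₁)
    (hv : v = 1) : u₁ = u ∧ v₁ = 1 := by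
  induction g with
  | empty_left v => exact ⟨rfl, hv⟩
  | empty_top u => exact ⟨rfl, rfl⟩
  | cancel s => exact absurd hv (of_ne_one s)
  | rel s t u₁ v₁ h => exact absurd hv (of_ne_one t)
  | horiz g1 g2 ih1 ih2 =>
      rcases mul_eq_one' hv with ⟨h1, h2⟩
      rcases ih1 h1 with ⟨e1, e2⟩
      rcases ih2 h2 with ⟨e3, e4⟩
      exact ⟨e3.trans e1, by rw [e2, e4, one_mul]⟩
  | vert g1 g2 ih1 ih2 =>
      rcases ih1 hv with ⟨e1, e2⟩
      rcases ih2 e2 with ⟨e3, e4⟩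
      exact ⟨by rw [e1, e3], e4⟩

/-- A grid with empty left edge is trivial. -/
theorem grid_left_one {u v u₁ v₁ : FreeMonoid S} (g : RevGrid R u v u₁ v₁)
    (hu : u = 1) : u₁ = 1 ∧ v₁ = v := by
  induction g with
  | empty_left v => exact ⟨rfl, rfl⟩
  | empty_top u => exact ⟨hu, rfl⟩
  | cancel s => exact absurd hu (of_ne_one s)
  | rel s t u₁ v₁ h => exact absurd hu (of_ne_one s)
  | horiz g1 g2 ih1 ih2 =>
      rcases ih1 hu with ⟨e1, e2⟩
      rcases ih2 e1 with ⟨e3, e4⟩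
      exact ⟨e3, by rw [e2, e4]⟩
  | vert g1 g2 ih1 ih2 =>
      rcases mul_eq_one' hu with ⟨h1, h2⟩
      rcases ih1 h1 with ⟨e1, e2⟩
      rcases ih2 h2 with ⟨e3, e4⟩
      exact ⟨by rw [e1, e3, one_mul], e4.trans e2⟩

/-- Vertical splitting of a grid along a factorization of the left edge. -/
theorem grid_vsplit {w v w₁ v₁ : FreeMonoid S} (g : RevGrid R w v w₁ v₁) :
    ∀ u u' : FreeMonoid S, w = u * u' →
    ∃ a b m : FreeMonoid S, w₁ = a * b ∧ RevGrid R u v a m ∧ RevGrid R u' m b v₁ := by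
  induction g with
  | empty_left v =>
      intro u u' h
      rcases mul_eq_one' h.symm with ⟨rfl, rfl⟩
      exact ⟨1, 1, v, (one_mul 1).symm, RevGrid.empty_left v, RevGrid.empty_left v⟩
  | empty_top w =>
      intro u u' h
      exact ⟨u, u', 1, h, RevGrid.empty_top u, RevGrid.empty_top u'⟩
  | cancel s =>
      intro u u' h
      rcases mul_eq_of h.symm with ⟨rfl, rfl⟩ | ⟨rfl, rfl⟩
      · exact ⟨1, 1, .of s, (one_mul 1).symm, RevGrid.empty_left _, RevGrid.cancel s⟩
      · exact ⟨1, 1, 1, (one_mul 1).symm, RevGrid.cancel s, RevGrid.empty_left 1⟩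
  | rel s t u₁ v₁ hr =>
      intro u u' h
      rcases mul_eq_of h.symm with ⟨rfl, rfl⟩ | ⟨rfl, rfl⟩
      · exact ⟨1, u₁, .of t, (one_mul u₁).symm, RevGrid.empty_left _, RevGrid.rel s t u₁ v₁ hr⟩
      · exact ⟨u₁, 1, v₁, (mul_one u₁).symm, RevGrid.rel s t u₁ v₁ hr, RevGrid.empty_left v₁⟩
  | horiz g1 g2 ih1 ih2 =>
      intro u u' h
      rcases ih1 u u' h with ⟨a, b, m, hm, ga, gb⟩
      rcases ih2 a b hm with ⟨a', b', m', hm', ga', gb'⟩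
      exact ⟨a', b', m * m', hm', RevGrid.horiz ga ga', RevGrid.horiz gb gb'⟩
  | vert g1 g2 ih1 ih2 =>
      intro u u' h
      rcases mul_eq_mul h.symm with ⟨c, ⟨h1, h2⟩ | ⟨h1, h2⟩⟩
      · -- first block = u * c, u' = c * (second block)
        rcases ih1 u c h1 with ⟨a, b, m, hm, ga, gb⟩
        refine ⟨a, b * _, m, by rw [hm, mul_assoc], ga, ?_⟩
        rw [h2]
        exact RevGrid.vert gb g2
      · -- u = first block * c, second block's left edge splits
        rcases ih2 c u' h2 with ⟨a, b, m, hm, ga, gb⟩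
        refine ⟨_ * a, b, m, by rw [hm, mul_assoc], ?_, gb⟩
        rw [h1]
        exact RevGrid.vert g1 ga

end Stmt19Aux

namespace Stmt19Aux
variable {S : Type*} {R : FreeMonoid S → FreeMonoid S → Prop}

/-- Horizontal splitting of a grid along a factorization of the top edge. -/
theorem grid_hsplit {u w u₁ w₁ : FreeMonoid S} (g : RevGrid R u w u₁ w₁) :
    ∀ v v' : FreeMonoid S, w = v * v' →
    ∃ a b m : FreeMonoid S, w₁ = a * b ∧ RevGrid R u v m a ∧ RevGrid R m v' u₁ b := by
  induction g with
  | empty_left w =>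
      intro v v' h
      exact ⟨v, v', 1, h, RevGrid.empty_left v, RevGrid.empty_left v'⟩
  | empty_top u =>
      intro v v' h
      rcases mul_eq_one' h.symm with ⟨rfl, rfl⟩
      exact ⟨1, 1, u, (one_mul 1).symm, RevGrid.empty_top u, RevGrid.empty_top u⟩
  | cancel s =>
      intro v v' h
      rcases mul_eq_of h.symm with ⟨rfl, rfl⟩ | ⟨rfl, rfl⟩
      · exact ⟨1, 1, .of s, (one_mul 1).symm, RevGrid.empty_top _, RevGrid.cancel s⟩
      · exact ⟨1, 1, 1, (one_mul 1).symm, RevGrid.cancel s, RevGrid.empty_top 1⟩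
  | rel s t u₁ v₁ hr =>
      intro v v' h
      rcases mul_eq_of h.symm with ⟨rfl, rfl⟩ | ⟨rfl, rfl⟩
      · exact ⟨1, v₁, .of s, (one_mul v₁).symm, RevGrid.empty_top _, RevGrid.rel s t u₁ v₁ hr⟩
      · exact ⟨v₁, 1, u₁, (mul_one v₁).symm, RevGrid.rel s t u₁ v₁ hr, RevGrid.empty_top u₁⟩
  | horiz g1 g2 ih1 ih2 =>
      intro v v' h
      rcases mul_eq_mul h.symm with ⟨c, ⟨h1, h2⟩ | ⟨h1, h2⟩⟩
      · rcases ih1 v c h1 with ⟨a, b, m, hm, ga, gb⟩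
        refine ⟨a, b * _, m, by rw [hm, mul_assoc], ga, ?_⟩
        rw [h2]
        exact RevGrid.horiz gb g2
      · rcases ih2 c v' h2 with ⟨a, b, m, hm, ga, gb⟩
        refine ⟨_ * a, b, m, by rw [hm, mul_assoc], ?_, gb⟩
        rw [h1]
        exact RevGrid.horiz g1 ga
  | vert g1 g2 ih1 ih2 =>
      intro v v' h
      rcases ih1 v v' h with ⟨a, b, m, hm, ga, gb⟩
      rcases ih2 a b hm with ⟨a', b', m', hm', ga', gb'⟩
      exact ⟨a', b', m * m', hm', RevGrid.vert ga ga', RevGrid.vert gb gb'⟩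

/-- Inversion for grids whose left and top edges are single letters. -/
theorem grid_single {u v u₁ v₁ : FreeMonoid S} (g : RevGrid R u v u₁ v₁) :
    ∀ s t : S, u = .of s → v = .of t →
    (s = t ∧ u₁ = 1 ∧ v₁ = 1) ∨ R (.of s * v₁) (.of t * u₁) ∨ R (.of t * u₁) (.of s * v₁) := by
  induction g with
  | empty_left v => intro s t hu hv; exact absurd hu.symm (of_ne_one s)
  | empty_top u => intro s t hu hv; exact absurd hv.symm (of_ne_one t)
  | cancel s' =>
      intro s t hu hv
      have h1 : s = s' := FreeMonoid.of_injective hu.symm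
      have h2 : t = s' := FreeMonoid.of_injective hv.symm
      exact Or.inl ⟨h1.trans h2.symm, rfl, rfl⟩
  | rel s' t' u₁ v₁ hr =>
      intro s t hu hv
      have h1 : s = s' := FreeMonoid.of_injective hu.symm
      have h2 : t = t' := FreeMonoid.of_injective hv.symm
      subst h1; subst h2
      exact Or.inr hr
  | horiz g1 g2 ih1 ih2 =>
      intro s t hu hv
      rcases mul_eq_of hv with ⟨h1, h2⟩ | ⟨h1, h2⟩
      · rcases grid_top_one g1 h1 with ⟨e1, e2⟩
        rcases ih2 s t (e1.trans hu) h2 with h | h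
        · exact Or.inl ⟨h.1, h.2.1, by rw [e2, h.2.2, one_mul]⟩
        · rw [e2, one_mul]; exact Or.inr h
      · rcases grid_top_one g2 h2 with ⟨e1, e2⟩
        rcases ih1 s t hu h1 with h | h
        · exact Or.inl ⟨h.1, e1.trans h.2.1, by rw [h.2.2, e2, one_mul]⟩
        · rw [e1, e2, mul_one]; exact Or.inr h
  | vert g1 g2 ih1 ih2 =>
      intro s t hu hv
      rcases mul_eq_of hu with ⟨h1, h2⟩ | ⟨h1, h2⟩
      · rcases grid_left_one g1 h1 with ⟨e1, e2⟩
        rcases ih2 s t h2 (e2.trans hv) with h | h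
        · exact Or.inl ⟨h.1, by rw [e1, h.2.1, one_mul], h.2.2⟩
        · rw [e1, one_mul]; exact Or.inr h
      · rcases grid_left_one g2 h2 with ⟨e1, e2⟩
        rcases ih1 s t h1 hv with h | h
        · exact Or.inl ⟨h.1, by rw [h.2.1, e1, one_mul], e2.trans h.2.2⟩
        · rw [e1, mul_one, e2]; exact Or.inr h

end Stmt19Aux

namespace Stmt19Aux
variable {S : Type*} {R : FreeMonoid S → FreeMonoid S → Prop}

/-- Cancelling a single letter. -/
theorem cancel_of
    (hcomplete : ∀ u v : FreeMonoid S, conGen R u v → RevGrid R u v 1 1)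
    (hnodup : ∀ (s : S) (u v : FreeMonoid S),
      R (FreeMonoid.of s * u) (FreeMonoid.of s * v) → u = v)
    (s : S) (x y : FreeMonoid S) (h : ConGen.Rel R (.of s * x) (.of s * y)) :
    ConGen.Rel R x y := by
  have g : RevGrid R (.of s * x) (.of s * y) 1 1 := hcomplete _ _ h
  rcases grid_vsplit g (.of s) x rfl with ⟨a, b, m, hab, g1, g2⟩
  rcases mul_eq_one' hab.symm with ⟨rfl, rfl⟩
  rcases grid_hsplit g1 (.of s) y rfl with ⟨c, d, m', hm, g3, g4⟩
  have hcm : m' = c := by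
    rcases grid_single g3 s s rfl rfl with h' | h' | h'
    · rw [h'.2.1, h'.2.2]
    · exact (hnodup s c m' h').symm
    · exact hnodup s m' c h'
  have s2 := grid_sound g2  -- x * 1 ≡ m * 1
  have s4 := grid_sound g4  -- m' * d ≡ y * 1
  rw [mul_one, mul_one] at s2
  rw [mul_one] at s4
  rw [hm, ← hcm] at s2
  exact s2.trans s4
  
/-- Cancelling a word. -/
theorem cancel_word
    (hcomplete : ∀ u v : FreeMonoid S, conGen R u v → RevGrid R u v 1 1)
    (hnodup : ∀ (s : S) (u v : FreeMonoid S),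
      R (FreeMonoid.of s * u) (FreeMonoid.of s * v) → u = v) :
    ∀ w x y : FreeMonoid S, ConGen.Rel R (w * x) (w * y) → ConGen.Rel R x y := by
  intro w
  induction w using FreeMonoid.recOn with
  | one => intro x y h; rw [one_mul, one_mul] at h; exact h
  | of_mul s w ih =>
      intro x y h
      rw [mul_assoc, mul_assoc] at h
      exact ih x y (cancel_of hcomplete hnodup s (w * x) (w * y) h)

end Stmt19Aux


/-- If a monoid presentation `(S,R)` without `ε`-relations is complete for
right reversing (every pair of `≡_R`-equivalent words right-reverses to
`(ε, ε)`), and `R` contains no relation of the form `s·u = s·v` with `s ∈ S`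
and `u ≠ v`, then the presented monoid is left cancellative. -/
theorem stmt19 {S : Type*} (R : FreeMonoid S → FreeMonoid S → Prop)
    (heps : ∀ w : FreeMonoid S, w ≠ 1 → ¬ R w 1 ∧ ¬ R 1 w)
    (hcomplete : ∀ u v : FreeMonoid S, conGen R u v → RevGrid R u v 1 1)
    (hnodup : ∀ (s : S) (u v : FreeMonoid S),
      R (FreeMonoid.of s * u) (FreeMonoid.of s * v) → u = v) :
    ∀ g x y : (conGen R).Quotient, g * x = g * y → x = y := by
  intro g x y h
  induction g using Con.induction_on with
  | H w =>
    induction x using Con.induction_on with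
    | H x' =>
      induction y using Con.induction_on with
      | H y' =>
        rw [← Con.coe_mul, ← Con.coe_mul] at h
        have h' : (conGen R) (w * x') (w * y') := ((conGen R).eq).mp h
        exact ((conGen R).eq).mpr (Stmt19Aux.cancel_word hcomplete hnodup w x' y' h')
end
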